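/- Equivalence of G3c^= and G3c^=⁻: a sequent Γ ⇒ Δ is derivable in G3c^= if and only if it is derivable in G3c^=⁻. -/

import Mathlib

/-!
Repl⁻ is admissible in G3c^=: weaken its premise `s = r, P[v/r], Γ ⇒ Δ` by `P[v/s]` and apply
Repl. Weakening is only needed by formulas whose free variables occur in atoms of the
antecedent; atoms persist up a derivation, so such variables are never eigenvariables there.

Conversely, the atoms that Repl adds to an antecedent are obtained from atoms already there by
replacement along equations. Deleting all of them from a G3c^= derivation leaves a G3c^=⁻
derivation, except at axioms whose principal atom was deleted; such an atom is recreated from the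
remaining antecedent by a chain of Repl⁻ steps, read bottom-up. G3c^=⁻ has no contraction, but
the equations that the chain uses more than once can be duplicated with Repl⁻ and Ref.
-/

open FirstOrder Language Multiset

universe u v

variable {L : FirstOrder.Language.{u, v}}

/-- Number of occurrences of the variable `v` in a term. -/
def tCount (v : ℕ) : L.Term ℕ → ℕ
  | .var w => if w = v then 1 else 0
  | .func _ ts => Finset.univ.sum fun i => tCount v (ts i)

/-- First-order formulas over the language `L` (with built-in equality),
with natural numbers as variables. -/
inductive Fm (L : FirstOrder.Language.{u, v}) : Type (max u v) where
  | falsum : Fm L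
  | equal : L.Term ℕ → L.Term ℕ → Fm L
  | rel {l : ℕ} : L.Relations l → (Fin l → L.Term ℕ) → Fm L
  | and : Fm L → Fm L → Fm L
  | or : Fm L → Fm L → Fm L
  | imp : Fm L → Fm L → Fm L
  | all : ℕ → Fm L → Fm L
  | ex : ℕ → Fm L → Fm L

namespace Fm

/-- Atomic formulas: equalities and relational atoms. -/
inductive IsAtomic : Fm L → Prop where
  | equal (t₁ t₂ : L.Term ℕ) : (Fm.equal t₁ t₂).IsAtomic
  | rel {l : ℕ} (R : L.Relations l) (ts : Fin l → L.Term ℕ) : (Fm.rel R ts).IsAtomic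

/-- Number of free occurrences of the variable `v` in a formula. -/
def fCount (v : ℕ) : Fm L → ℕ
  | falsum => 0
  | equal t₁ t₂ => tCount v t₁ + tCount v t₂
  | rel _ ts => Finset.univ.sum fun i => tCount v (ts i)
  | and A B => fCount v A + fCount v B
  | or A B => fCount v A + fCount v B
  | imp A B => fCount v A + fCount v B
  | all y A => if y = v then 0 else fCount v A
  | ex y A => if y = v then 0 else fCount v A

/-- The set of free variables of a formula. -/
def freeVars : Fm L → Set ℕ
  | falsum => ∅
  | equal t₁ t₂ => {w | tCount w t₁ ≠ 0 ∨ tCount w t₂ ≠ 0}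
  | rel _ ts => {w | ∃ i, tCount w (ts i) ≠ 0}
  | and A B => A.freeVars ∪ B.freeVars
  | or A B => A.freeVars ∪ B.freeVars
  | imp A B => A.freeVars ∪ B.freeVars
  | all y A => A.freeVars \ {y}
  | ex y A => A.freeVars \ {y}

/-- Simultaneous substitution of terms for the free variables of a formula. -/
def ssub (σ : ℕ → L.Term ℕ) : Fm L → Fm L
  | falsum => falsum
  | equal t₁ t₂ => equal (t₁.subst σ) (t₂.subst σ)
  | rel R ts => rel R fun i => (ts i).subst σ
  | and A B => and (A.ssub σ) (B.ssub σ)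
  | or A B => or (A.ssub σ) (B.ssub σ)
  | imp A B => imp (A.ssub σ) (B.ssub σ)
  | all y A => all y (A.ssub (Function.update σ y (Term.var y)))
  | ex y A => ex y (A.ssub (Function.update σ y (Term.var y)))

/-- `A.subst v t` is `A[v/t]`, the substitution of the term `t`
for the variable `v` in `A`. -/
def subst (v : ℕ) (t : L.Term ℕ) (A : Fm L) : Fm L :=
  A.ssub (Function.update (Term.var : ℕ → L.Term ℕ) v t)

/-- `t` is free for `x` in `A` (no free occurrence of `x` lies in the scope of a
quantifier binding a variable of `t`). -/
def freeFor (t : L.Term ℕ) (x : ℕ) : Fm L → Prop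
  | falsum => True
  | equal _ _ => True
  | rel _ _ => True
  | and A B => freeFor t x A ∧ freeFor t x B
  | or A B => freeFor t x A ∧ freeFor t x B
  | imp A B => freeFor t x A ∧ freeFor t x B
  | all y A => x = y ∨ x ∉ A.freeVars ∨ (tCount y t = 0 ∧ freeFor t x A)
  | ex y A => x = y ∨ x ∉ A.freeVars ∨ (tCount y t = 0 ∧ freeFor t x A)

end Fm

/-- The rule Repl, given as the relation between the antecedent of the premiss and the
antecedent of the conclusion (the succedent is unchanged): from
`s = r, P[v/s], P[v/r], Γ ⇒ Δ` infer `s = r, P[v/s], Γ ⇒ Δ`, for `P` atomic and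
`v` not occurring in `s, r`. -/
def ReplFull (L : FirstOrder.Language.{u, v}) : Multiset (Fm L) → Multiset (Fm L) → Prop := fun Γp Γc =>
  ∃ (s r : L.Term ℕ) (v : ℕ) (P : Fm L) (Γ : Multiset (Fm L)),
    P.IsAtomic ∧ tCount v s = 0 ∧ tCount v r = 0 ∧
    Γp = Fm.equal s r ::ₘ P.subst v s ::ₘ P.subst v r ::ₘ Γ ∧
    Γc = Fm.equal s r ::ₘ P.subst v s ::ₘ Γ

/-- The rule Repl⁻: from `s = r, P[v/r], Γ ⇒ Δ` infer `s = r, P[v/s], Γ ⇒ Δ`,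
for `P` atomic and `v` not occurring in `s, r`. -/
def ReplMinus (L : FirstOrder.Language.{u, v}) : Multiset (Fm L) → Multiset (Fm L) → Prop := fun Γp Γc =>
  ∃ (s r : L.Term ℕ) (v : ℕ) (P : Fm L) (Γ : Multiset (Fm L)),
    P.IsAtomic ∧ tCount v s = 0 ∧ tCount v r = 0 ∧
    Γp = Fm.equal s r ::ₘ P.subst v r ::ₘ Γ ∧
    Γc = Fm.equal s r ::ₘ P.subst v s ::ₘ Γ

/-- The rule Repl₁⁻: Repl⁻ restricted to atomic `P` with exactly one occurrence of `v`. -/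
def ReplMinus1 (L : FirstOrder.Language.{u, v}) : Multiset (Fm L) → Multiset (Fm L) → Prop := fun Γp Γc =>
  ∃ (s r : L.Term ℕ) (v : ℕ) (P : Fm L) (Γ : Multiset (Fm L)),
    P.IsAtomic ∧ tCount v s = 0 ∧ tCount v r = 0 ∧ Fm.fCount v P = 1 ∧
    Γp = Fm.equal s r ::ₘ P.subst v r ::ₘ Γ ∧
    Γc = Fm.equal s r ::ₘ P.subst v s ::ₘ Γ

/-- `DerC rp n Γ Δ`: the sequent `Γ ⇒ Δ` has a derivation of height at most `n` in the
classical multisuccedent G3 calculus `G3c` with the equality rule Ref and the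
replacement rule given by `rp` (e.g. `ReplFull L` for `G3c^=`, `ReplMinus L` for `G3c^=⁻`,
`ReplMinus1 L` for `G3c₁^=⁻`). -/
inductive DerC (rp : Multiset (Fm L) → Multiset (Fm L) → Prop) :
    ℕ → Multiset (Fm L) → Multiset (Fm L) → Prop where
  | ax {n : ℕ} {Γ Δ : Multiset (Fm L)} {P : Fm L} (hP : P.IsAtomic) :
      DerC rp n (P ::ₘ Γ) (P ::ₘ Δ)
  | botL {n : ℕ} {Γ Δ : Multiset (Fm L)} : DerC rp n (Fm.falsum ::ₘ Γ) Δ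
  | andL {n : ℕ} {Γ Δ : Multiset (Fm L)} {A B : Fm L} :
      DerC rp n (A ::ₘ B ::ₘ Γ) Δ → DerC rp (n + 1) (Fm.and A B ::ₘ Γ) Δ
  | andR {n : ℕ} {Γ Δ : Multiset (Fm L)} {A B : Fm L} :
      DerC rp n Γ (A ::ₘ Δ) → DerC rp n Γ (B ::ₘ Δ) → DerC rp (n + 1) Γ (Fm.and A B ::ₘ Δ)
  | orL {n : ℕ} {Γ Δ : Multiset (Fm L)} {A B : Fm L} :
      DerC rp n (A ::ₘ Γ) Δ → DerC rp n (B ::ₘ Γ) Δ → DerC rp (n + 1) (Fm.or A B ::ₘ Γ) Δ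
  | orR {n : ℕ} {Γ Δ : Multiset (Fm L)} {A B : Fm L} :
      DerC rp n Γ (A ::ₘ B ::ₘ Δ) → DerC rp (n + 1) Γ (Fm.or A B ::ₘ Δ)
  | impL {n : ℕ} {Γ Δ : Multiset (Fm L)} {A B : Fm L} :
      DerC rp n Γ (A ::ₘ Δ) → DerC rp n (B ::ₘ Γ) Δ → DerC rp (n + 1) (Fm.imp A B ::ₘ Γ) Δ
  | impR {n : ℕ} {Γ Δ : Multiset (Fm L)} {A B : Fm L} :
      DerC rp n (A ::ₘ Γ) (B ::ₘ Δ) → DerC rp (n + 1) Γ (Fm.imp A B ::ₘ Δ)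
  | allL {n : ℕ} {Γ Δ : Multiset (Fm L)} {x : ℕ} {t : L.Term ℕ} {A : Fm L}
      (hf : Fm.freeFor t x A) :
      DerC rp n (A.subst x t ::ₘ Fm.all x A ::ₘ Γ) Δ → DerC rp (n + 1) (Fm.all x A ::ₘ Γ) Δ
  | allR {n : ℕ} {Γ Δ : Multiset (Fm L)} {x y : ℕ} {A : Fm L}
      (hf : Fm.freeFor (Term.var y) x A) (hy : y ∉ (Fm.all x A).freeVars)
      (hΓ : ∀ C ∈ Γ, y ∉ Fm.freeVars C) (hΔ : ∀ C ∈ Δ, y ∉ Fm.freeVars C) :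
      DerC rp n Γ (A.subst x (Term.var y) ::ₘ Δ) → DerC rp (n + 1) Γ (Fm.all x A ::ₘ Δ)
  | exL {n : ℕ} {Γ Δ : Multiset (Fm L)} {x y : ℕ} {A : Fm L}
      (hf : Fm.freeFor (Term.var y) x A) (hy : y ∉ (Fm.ex x A).freeVars)
      (hΓ : ∀ C ∈ Γ, y ∉ Fm.freeVars C) (hΔ : ∀ C ∈ Δ, y ∉ Fm.freeVars C) :
      DerC rp n (A.subst x (Term.var y) ::ₘ Γ) Δ → DerC rp (n + 1) (Fm.ex x A ::ₘ Γ) Δ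
  | exR {n : ℕ} {Γ Δ : Multiset (Fm L)} {x : ℕ} {t : L.Term ℕ} {A : Fm L}
      (hf : Fm.freeFor t x A) :
      DerC rp n Γ (A.subst x t ::ₘ Fm.ex x A ::ₘ Δ) → DerC rp (n + 1) Γ (Fm.ex x A ::ₘ Δ)
  | ref {n : ℕ} {Γ Δ : Multiset (Fm L)} (t : L.Term ℕ) :
      DerC rp n (Fm.equal t t ::ₘ Γ) Δ → DerC rp (n + 1) Γ Δ
  | repl {n : ℕ} {Γp Γc Δ : Multiset (Fm L)} (h : rp Γp Γc) :
      DerC rp n Γp Δ → DerC rp (n + 1) Γc Δ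

/-- `DerI rp n Γ Δ`: the sequent `Γ ⇒ Δ` has a derivation of height at most `n` in the
intuitionistic multisuccedent G3 calculus (the right rules for `→` and `∀` have
single-succedent premisses, and L→ repeats its principal formula) with the equality rule
Ref and the replacement rule given by `rp`. -/
inductive DerI (rp : Multiset (Fm L) → Multiset (Fm L) → Prop) :
    ℕ → Multiset (Fm L) → Multiset (Fm L) → Prop where
  | ax {n : ℕ} {Γ Δ : Multiset (Fm L)} {P : Fm L} (hP : P.IsAtomic) :
      DerI rp n (P ::ₘ Γ) (P ::ₘ Δ)
  | botL {n : ℕ} {Γ Δ : Multiset (Fm L)} : DerI rp n (Fm.falsum ::ₘ Γ) Δ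
  | andL {n : ℕ} {Γ Δ : Multiset (Fm L)} {A B : Fm L} :
      DerI rp n (A ::ₘ B ::ₘ Γ) Δ → DerI rp (n + 1) (Fm.and A B ::ₘ Γ) Δ
  | andR {n : ℕ} {Γ Δ : Multiset (Fm L)} {A B : Fm L} :
      DerI rp n Γ (A ::ₘ Δ) → DerI rp n Γ (B ::ₘ Δ) → DerI rp (n + 1) Γ (Fm.and A B ::ₘ Δ)
  | orL {n : ℕ} {Γ Δ : Multiset (Fm L)} {A B : Fm L} :
      DerI rp n (A ::ₘ Γ) Δ → DerI rp n (B ::ₘ Γ) Δ → DerI rp (n + 1) (Fm.or A B ::ₘ Γ) Δ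
  | orR {n : ℕ} {Γ Δ : Multiset (Fm L)} {A B : Fm L} :
      DerI rp n Γ (A ::ₘ B ::ₘ Δ) → DerI rp (n + 1) Γ (Fm.or A B ::ₘ Δ)
  | impL {n : ℕ} {Γ Δ : Multiset (Fm L)} {A B : Fm L} :
      DerI rp n (Fm.imp A B ::ₘ Γ) (A ::ₘ Δ) → DerI rp n (B ::ₘ Γ) Δ →
      DerI rp (n + 1) (Fm.imp A B ::ₘ Γ) Δ
  | impR {n : ℕ} {Γ Δ : Multiset (Fm L)} {A B : Fm L} :
      DerI rp n (A ::ₘ Γ) {B} → DerI rp (n + 1) Γ (Fm.imp A B ::ₘ Δ)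
  | allL {n : ℕ} {Γ Δ : Multiset (Fm L)} {x : ℕ} {t : L.Term ℕ} {A : Fm L}
      (hf : Fm.freeFor t x A) :
      DerI rp n (A.subst x t ::ₘ Fm.all x A ::ₘ Γ) Δ → DerI rp (n + 1) (Fm.all x A ::ₘ Γ) Δ
  | allR {n : ℕ} {Γ Δ : Multiset (Fm L)} {x y : ℕ} {A : Fm L}
      (hf : Fm.freeFor (Term.var y) x A) (hy : y ∉ (Fm.all x A).freeVars)
      (hΓ : ∀ C ∈ Γ, y ∉ Fm.freeVars C) :
      DerI rp n Γ {A.subst x (Term.var y)} → DerI rp (n + 1) Γ (Fm.all x A ::ₘ Δ)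
  | exL {n : ℕ} {Γ Δ : Multiset (Fm L)} {x y : ℕ} {A : Fm L}
      (hf : Fm.freeFor (Term.var y) x A) (hy : y ∉ (Fm.ex x A).freeVars)
      (hΓ : ∀ C ∈ Γ, y ∉ Fm.freeVars C) (hΔ : ∀ C ∈ Δ, y ∉ Fm.freeVars C) :
      DerI rp n (A.subst x (Term.var y) ::ₘ Γ) Δ → DerI rp (n + 1) (Fm.ex x A ::ₘ Γ) Δ
  | exR {n : ℕ} {Γ Δ : Multiset (Fm L)} {x : ℕ} {t : L.Term ℕ} {A : Fm L}
      (hf : Fm.freeFor t x A) :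
      DerI rp n Γ (A.subst x t ::ₘ Fm.ex x A ::ₘ Δ) → DerI rp (n + 1) Γ (Fm.ex x A ::ₘ Δ)
  | ref {n : ℕ} {Γ Δ : Multiset (Fm L)} (t : L.Term ℕ) :
      DerI rp n (Fm.equal t t ::ₘ Γ) Δ → DerI rp (n + 1) Γ Δ
  | repl {n : ℕ} {Γp Γc Δ : Multiset (Fm L)} (h : rp Γp Γc) :
      DerI rp n Γp Δ → DerI rp (n + 1) Γc Δ

open Fm

theorem tCount_eq_zero_of_notMem_varFinset {v : ℕ} {t : L.Term ℕ} (h : v ∉ t.varFinset) :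
    tCount v t = 0 := by
  induction t with
  | var w => simp_all [tCount, Term.varFinset, eq_comm]
  | func f ts ih => simp_all [tCount, Term.varFinset]

theorem exists_tCount_eq_zero (a b : L.Term ℕ) : ∃ v, tCount v a = 0 ∧ tCount v b = 0 := by
  obtain ⟨v, hv⟩ := Infinite.exists_notMem_finset (a.varFinset ∪ b.varFinset)
  rw [Finset.mem_union, not_or] at hv
  exact ⟨v, tCount_eq_zero_of_notMem_varFinset hv.1, tCount_eq_zero_of_notMem_varFinset hv.2⟩

theorem subst_update_of_tCount_eq_zero {v : ℕ} {t : L.Term ℕ} (h : tCount v t = 0)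
    (u : L.Term ℕ) : t.subst (Function.update Term.var v u) = t := by
  induction t with
  | var w => simp_all [tCount, Function.update_of_ne]
  | func f ts ih => simp_all [tCount, Term.subst]

theorem tCount_subst_update_ne_zero {w v : ℕ} {s : L.Term ℕ} (r : L.Term ℕ) {t : L.Term ℕ}
    (h : tCount w (t.subst (Function.update Term.var v s)) ≠ 0) :
    tCount w s ≠ 0 ∨ tCount w (t.subst (Function.update Term.var v r)) ≠ 0 := by
  induction t with
  | var a =>
    by_cases ha : a = v
    · subst ha; simp_all
    · simp_all [Function.update_of_ne]
  | func f ts ih =>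
    simp only [Term.subst, tCount, ne_eq, Finset.sum_eq_zero_iff, Finset.mem_univ, true_implies,
      not_forall] at h ⊢
    obtain ⟨i, hi⟩ := h
    exact (ih i hi).imp id fun h => ⟨i, h⟩

namespace Fm

def IsEquation (C : Fm L) : Prop := ∃ a b, C = equal a b

theorem IsAtomic.subst {P : Fm L} (hP : P.IsAtomic) (v : ℕ) (t : L.Term ℕ) :
    (P.subst v t).IsAtomic := by
  cases hP <;> constructor

theorem IsAtomic.isEquation_subst {P : Fm L} (hP : P.IsAtomic) {v : ℕ} (s : L.Term ℕ)
    {r : L.Term ℕ} (h : (P.subst v r).IsEquation) : (P.subst v s).IsEquation := by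
  cases hP with
  | equal => exact ⟨_, _, rfl⟩
  | rel => obtain ⟨_, _, ⟨⟩⟩ := h

theorem IsAtomic.freeVars_subst_subset {P : Fm L} (hP : P.IsAtomic) (v : ℕ) (s r : L.Term ℕ) :
    (P.subst v s).freeVars ⊆ (Fm.equal s r).freeVars ∪ (P.subst v r).freeVars := by
  intro w hw
  cases hP with
  | equal t₁ t₂ =>
    simp only [Fm.subst, ssub, freeVars, Set.mem_union, Set.mem_ofPred_eq] at hw ⊢
    rcases hw with h | h <;> rcases tCount_subst_update_ne_zero r h with h | h <;> simp [h]
  | rel R ts =>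
    simp only [Fm.subst, ssub, freeVars, Set.mem_union, Set.mem_ofPred_eq] at hw ⊢
    obtain ⟨i, h⟩ := hw
    rcases tCount_subst_update_ne_zero r h with h | h
    · exact Or.inl (Or.inl h)
    · exact Or.inr ⟨i, h⟩

end Fm

def atomSet (Γ : Multiset (Fm L)) : Set (Fm L) := {D | D ∈ Γ ∧ D.IsAtomic}

theorem atomSet_mono {Γ Γ' : Multiset (Fm L)} (h : Γ ⊆ Γ') : atomSet Γ ⊆ atomSet Γ' :=
  fun _ hD => ⟨h hD.1, hD.2⟩

theorem atomSet_cons_of_not_isAtomic {X : Fm L} (hX : ¬X.IsAtomic) (Γ : Multiset (Fm L)) :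
    atomSet (X ::ₘ Γ) = atomSet Γ := by
  ext D
  simp only [atomSet, Set.mem_ofPred_eq, Multiset.mem_cons, and_congr_left_iff,
    or_iff_right_iff_imp]
  rintro hD rfl
  exact absurd hD hX

inductive Reach (S : Set (Fm L)) : Fm L → Prop
  | base {C : Fm L} : C ∈ S → Reach S C
  | repl {s r : L.Term ℕ} {v : ℕ} {Q : Fm L} : Q.IsAtomic → tCount v s = 0 → tCount v r = 0 →
      Reach S (Q.subst v s) → Reach S (Fm.equal s r) → Reach S (Q.subst v r)

theorem Reach.mono {S S' : Set (Fm L)} (hS : S ⊆ S') {C : Fm L} (h : Reach S C) : Reach S' C := by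
  induction h with
  | base hC => exact .base (hS hC)
  | repl hQ hs hr _ _ ih₁ ih₂ => exact .repl hQ hs hr ih₁ ih₂

theorem Reach.isAtomic {Θ : Multiset (Fm L)} {C : Fm L} (h : Reach (atomSet Θ) C) :
    C.IsAtomic := by
  induction h with
  | base hC => exact hC.2
  | repl hQ _ _ _ _ _ _ => exact hQ.subst _ _

def Der (rp : Multiset (Fm L) → Multiset (Fm L) → Prop) (Γ Δ : Multiset (Fm L)) : Prop :=
  ∃ n, DerC rp n Γ Δ

section Height

variable {rp : Multiset (Fm L) → Multiset (Fm L) → Prop}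

theorem DerC.succ {n : ℕ} {Γ Δ : Multiset (Fm L)} (D : DerC rp n Γ Δ) :
    DerC rp (n + 1) Γ Δ := by
  induction D with
  | ax hP => exact .ax hP
  | botL => exact .botL
  | andL _ ih => exact .andL ih
  | andR _ _ ih₁ ih₂ => exact .andR ih₁ ih₂
  | orL _ _ ih₁ ih₂ => exact .orL ih₁ ih₂
  | orR _ ih => exact .orR ih
  | impL _ _ ih₁ ih₂ => exact .impL ih₁ ih₂
  | impR _ ih => exact .impR ih
  | allL hf _ ih => exact .allL hf ih
  | allR hf hy hΓ hΔ _ ih => exact .allR hf hy hΓ hΔ ih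
  | exL hf hy hΓ hΔ _ ih => exact .exL hf hy hΓ hΔ ih
  | exR hf _ ih => exact .exR hf ih
  | ref t _ ih => exact .ref t ih
  | repl h _ ih => exact .repl h ih

theorem DerC.mono {n m : ℕ} {Γ Δ : Multiset (Fm L)} (D : DerC rp n Γ Δ) (h : n ≤ m) :
    DerC rp m Γ Δ :=
  Nat.le_induction D (fun _ _ => DerC.succ) m h

theorem Der.map {Γ Δ Γ' Δ' : Multiset (Fm L)}
    (rule : ∀ n, DerC rp n Γ Δ → DerC rp (n + 1) Γ' Δ') : Der rp Γ Δ → Der rp Γ' Δ'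
  | ⟨n, D⟩ => ⟨n + 1, rule n D⟩

theorem Der.map₂ {Γ₁ Δ₁ Γ₂ Δ₂ Γ' Δ' : Multiset (Fm L)}
    (rule : ∀ n, DerC rp n Γ₁ Δ₁ → DerC rp n Γ₂ Δ₂ → DerC rp (n + 1) Γ' Δ') :
    Der rp Γ₁ Δ₁ → Der rp Γ₂ Δ₂ → Der rp Γ' Δ'
  | ⟨n₁, D₁⟩, ⟨n₂, D₂⟩ =>
    ⟨max n₁ n₂ + 1, rule _ (D₁.mono (le_max_left _ _)) (D₂.mono (le_max_right _ _))⟩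

theorem DerC.der_of_admissible {rq : Multiset (Fm L) → Multiset (Fm L) → Prop}
    (hadm : ∀ {Γp Γc Δ}, rp Γp Γc → Der rq Γp Δ → Der rq Γc Δ)
    {n : ℕ} {Γ Δ : Multiset (Fm L)} (D : DerC rp n Γ Δ) : Der rq Γ Δ := by
  induction D with
  | ax hP => exact ⟨0, .ax hP⟩
  | botL => exact ⟨0, .botL⟩
  | andL _ ih => exact ih.map fun _ => .andL
  | andR _ _ ih₁ ih₂ => exact Der.map₂ (fun _ => .andR) ih₁ ih₂
  | orL _ _ ih₁ ih₂ => exact Der.map₂ (fun _ => .orL) ih₁ ih₂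
  | orR _ ih => exact ih.map fun _ => .orR
  | impL _ _ ih₁ ih₂ => exact Der.map₂ (fun _ => .impL) ih₁ ih₂
  | impR _ ih => exact ih.map fun _ => .impR
  | allL hf _ ih => exact ih.map fun _ => .allL hf
  | allR hf hy hΓ hΔ _ ih => exact ih.map fun _ => .allR hf hy hΓ hΔ
  | exL hf hy hΓ hΔ _ ih => exact ih.map fun _ => .exL hf hy hΓ hΔ
  | exR hf _ ih => exact ih.map fun _ => .exR hf
  | ref t _ ih => exact ih.map fun _ => .ref t
  | repl h _ ih => exact hadm h ih

end Height

theorem Der.contract_equal {a b : L.Term ℕ} {Γ Δ : Multiset (Fm L)}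
    (d : Der (ReplMinus L) (Fm.equal a b ::ₘ Fm.equal a b ::ₘ Γ) Δ) :
    Der (ReplMinus L) (Fm.equal a b ::ₘ Γ) Δ := by
  obtain ⟨v, ha, hb⟩ := exists_tCount_eq_zero a b
  have hsubst : ∀ t, (Fm.equal a (Term.var v)).subst v t = Fm.equal a t := fun t => by
    simp [Fm.subst, ssub, subst_update_of_tCount_eq_zero ha]
  -- With `P := (a = v)`, Repl⁻ along `a = b` turns `P[v/b]`, the second copy of `a = b`, into
  -- `P[v/a]`, that is `a = a`, which Ref then removes.
  have hrepl : ReplMinus L (Fm.equal a b ::ₘ Fm.equal a b ::ₘ Γ)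
      (Fm.equal a b ::ₘ Fm.equal a a ::ₘ Γ) :=
    ⟨a, b, v, Fm.equal a (Term.var v), Γ, .equal _ _, ha, hb, by rw [hsubst], by rw [hsubst]⟩
  exact (d.map fun _ => .repl hrepl).map fun _ D => .ref a (Multiset.cons_swap _ _ _ ▸ D)

-- G3c^=⁻ has no weakening rule, and the elimination lemmas below leave extra atoms in the
-- antecedent, so derivability is required for every larger antecedent.
def StablyDer (rp : Multiset (Fm L) → Multiset (Fm L) → Prop) (Γ Δ : Multiset (Fm L)) : Prop :=
  ∀ Γ', Γ ≤ Γ' → Der rp Γ' Δ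

theorem StablyDer.replMinus {s r : L.Term ℕ} {v : ℕ} {Q : Fm L} (hQ : Q.IsAtomic)
    (hs : tCount v s = 0) (hr : tCount v r = 0) {Γ Δ : Multiset (Fm L)}
    (h : StablyDer (ReplMinus L) (Q.subst v r ::ₘ Γ) Δ) :
    StablyDer (ReplMinus L) (Fm.equal s r ::ₘ Q.subst v s ::ₘ Γ) Δ := by
  intro Γ' hΓ'
  obtain ⟨K, rfl⟩ := Multiset.le_iff_exists_add.1 hΓ'
  have hle : Q.subst v r ::ₘ Γ ≤ Fm.equal s r ::ₘ Q.subst v r ::ₘ (Γ + K) :=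
    (Multiset.cons_le_cons _ (Multiset.le_add_right _ _)).trans (Multiset.le_cons_self _ _)
  exact (h _ hle).map fun _ => .repl ⟨s, r, v, Q, Γ + K, hQ, hs, hr, rfl, by
    simp only [Multiset.cons_add]⟩

-- Unlike in `Reach.stablyDer_elim`, the atoms of `Θ` are kept: an equation of `Θ` can be used
-- after duplicating it with `Der.contract_equal`.
theorem Reach.stablyDer_elim_equation {Θ : Multiset (Fm L)} {C : Fm L}
    (hC : Reach (atomSet Θ) C) (hEq : C.IsEquation) {Γ Δ : Multiset (Fm L)}
    (h : StablyDer (ReplMinus L) (C ::ₘ (Θ + Γ)) Δ) : StablyDer (ReplMinus L) (Θ + Γ) Δ := by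
  induction hC generalizing Γ with
  | base hC =>
    obtain ⟨a, b, rfl⟩ := hEq
    intro Γ' hΓ'
    obtain ⟨Γ'', rfl⟩ := Multiset.exists_cons_of_mem
      (Multiset.mem_of_le hΓ' (Multiset.mem_add.2 (Or.inl hC.1)))
    exact (h _ (Multiset.cons_le_cons _ hΓ')).contract_equal
  | repl hQ hs hr _ _ ihQ ihE =>
    refine ihE ⟨_, _, rfl⟩ ?_
    rw [← Multiset.add_cons]
    refine ihQ (hQ.isEquation_subst _ hEq) ?_
    rw [Multiset.add_cons, Multiset.cons_swap]
    exact h.replMinus hQ hs hr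

theorem Reach.stablyDer_elim {Θ : Multiset (Fm L)} {C : Fm L} (hC : Reach (atomSet Θ) C)
    {Γ Δ : Multiset (Fm L)} (h : StablyDer (ReplMinus L) (C ::ₘ Γ) Δ) :
    StablyDer (ReplMinus L) (Θ + Γ) Δ := by
  induction hC generalizing Γ with
  | base hC =>
    obtain ⟨Θ₁, rfl⟩ := Multiset.exists_cons_of_mem hC.1
    refine fun Γ' hΓ' => h Γ' (le_trans ?_ hΓ')
    rw [Multiset.cons_add]
    exact Multiset.cons_le_cons _ (Multiset.le_add_left _ _)
  | repl hQ hs hr _ hE ihQ _ =>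
    refine hE.stablyDer_elim_equation ⟨_, _, rfl⟩ ?_
    rw [← Multiset.add_cons]
    refine ihQ ?_
    rw [Multiset.cons_swap]
    exact h.replMinus hQ hs hr

theorem Reach.der_cons_right {Θ : Multiset (Fm L)} {P : Fm L} (hP : Reach (atomSet Θ) P)
    (Δ : Multiset (Fm L)) : Der (ReplMinus L) Θ (P ::ₘ Δ) := by
  have hax : StablyDer (ReplMinus L) {P} (P ::ₘ Δ) := fun Γ' hΓ' => by
    obtain ⟨Γ'', rfl⟩ := Multiset.exists_cons_of_mem (Multiset.singleton_le.1 hΓ')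
    exact ⟨0, .ax hP.isAtomic⟩
  simpa using hP.stablyDer_elim hax Θ

def ReachExtension (Θ Ψ : Multiset (Fm L)) : Prop :=
  ∃ Φ, Ψ = Θ + Φ ∧ ∀ C ∈ Φ, Reach (atomSet Θ) C

namespace ReachExtension

variable {Θ Ψ : Multiset (Fm L)}

theorem refl (Θ : Multiset (Fm L)) : ReachExtension Θ Θ :=
  ⟨0, (add_zero Θ).symm, by simp⟩

theorem le (h : ReachExtension Θ Ψ) : Θ ≤ Ψ := by
  obtain ⟨Φ, rfl, -⟩ := h
  exact Multiset.le_add_right _ _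

theorem cons (Y : Fm L) (h : ReachExtension Θ Ψ) : ReachExtension (Y ::ₘ Θ) (Y ::ₘ Ψ) := by
  obtain ⟨Φ, rfl, hΦ⟩ := h
  exact ⟨Φ, (Multiset.cons_add _ _ _).symm,
    fun C hC => (hΦ C hC).mono (atomSet_mono (Multiset.subset_cons _ _))⟩

theorem mem_or_reach (h : ReachExtension Θ Ψ) {P : Fm L} (hP : P ∈ Ψ) :
    P ∈ Θ ∨ Reach (atomSet Θ) P := by
  obtain ⟨Φ, rfl, hΦ⟩ := h
  exact (Multiset.mem_add.1 hP).imp_right (hΦ P)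

theorem of_cons {X : Fm L} (hX : ¬X.IsAtomic) (h : ReachExtension Θ (X ::ₘ Ψ)) :
    ∃ Θ₁, Θ = X ::ₘ Θ₁ ∧ ReachExtension Θ₁ Ψ := by
  have hXΘ : X ∈ Θ := (h.mem_or_reach (Multiset.mem_cons_self _ _)).resolve_right
    fun hR => hX hR.isAtomic
  obtain ⟨Θ₁, rfl⟩ := Multiset.exists_cons_of_mem hXΘ
  obtain ⟨Φ, hΨ, hΦ⟩ := h
  rw [Multiset.cons_add, Multiset.cons_inj_right] at hΨ
  exact ⟨Θ₁, rfl, Φ, hΨ, by rwa [atomSet_cons_of_not_isAtomic hX] at hΦ⟩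

theorem of_replFull {Γp : Multiset (Fm L)} (hrepl : ReplFull L Γp Ψ) (h : ReachExtension Θ Ψ) :
    ReachExtension Θ Γp := by
  obtain ⟨s, r, v, Q, Γ, hQ, hs, hr, rfl, rfl⟩ := hrepl
  have hreach : ∀ {P}, P.IsAtomic → P ∈ Fm.equal s r ::ₘ Q.subst v s ::ₘ Γ →
      Reach (atomSet Θ) P := fun hP hmem =>
    (h.mem_or_reach hmem).elim (fun hΘ => .base ⟨hΘ, hP⟩) id
  have hQr : Reach (atomSet Θ) (Q.subst v r) :=
    .repl hQ hs hr (hreach (hQ.subst _ _) (by simp)) (hreach (.equal _ _) (by simp))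
  obtain ⟨Φ, hΨ, hΦ⟩ := h
  refine ⟨Q.subst v r ::ₘ Φ, ?_, by simpa [hQr] using hΦ⟩
  rw [Multiset.add_cons, ← hΨ, Multiset.cons_swap (Q.subst v s),
    Multiset.cons_swap (Fm.equal s r)]

end ReachExtension

theorem DerC.der_replMinus {n : ℕ} {Ψ Δ : Multiset (Fm L)} (D : DerC (ReplFull L) n Ψ Δ)
    {Θ : Multiset (Fm L)} (hΘ : ReachExtension Θ Ψ) : Der (ReplMinus L) Θ Δ := by
  induction D generalizing Θ with
  | ax hP =>
    rcases hΘ.mem_or_reach (Multiset.mem_cons_self _ _) with h | h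
    · obtain ⟨Θ₁, rfl⟩ := Multiset.exists_cons_of_mem h
      exact ⟨0, .ax hP⟩
    · exact h.der_cons_right _
  | botL =>
    obtain ⟨Θ₁, rfl, -⟩ := hΘ.of_cons (by nofun)
    exact ⟨0, .botL⟩
  | andL _ ih =>
    obtain ⟨Θ₁, rfl, h⟩ := hΘ.of_cons (by nofun)
    exact (ih ((h.cons _).cons _)).map fun _ => .andL
  | andR _ _ ih₁ ih₂ => exact Der.map₂ (fun _ => .andR) (ih₁ hΘ) (ih₂ hΘ)
  | orL _ _ ih₁ ih₂ =>
    obtain ⟨Θ₁, rfl, h⟩ := hΘ.of_cons (by nofun)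
    exact Der.map₂ (fun _ => .orL) (ih₁ (h.cons _)) (ih₂ (h.cons _))
  | orR _ ih => exact (ih hΘ).map fun _ => .orR
  | impL _ _ ih₁ ih₂ =>
    obtain ⟨Θ₁, rfl, h⟩ := hΘ.of_cons (by nofun)
    exact Der.map₂ (fun _ => .impL) (ih₁ h) (ih₂ (h.cons _))
  | impR _ ih => exact (ih (hΘ.cons _)).map fun _ => .impR
  | allL hf _ ih =>
    obtain ⟨Θ₁, rfl, h⟩ := hΘ.of_cons (by nofun)
    exact (ih ((h.cons _).cons _)).map fun _ => .allL hf
  | allR hf hy hΓ hΔ _ ih =>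
    exact (ih hΘ).map fun _ => .allR hf hy (fun C hC => hΓ C (Multiset.mem_of_le hΘ.le hC)) hΔ
  | exL hf hy hΓ hΔ _ ih =>
    obtain ⟨Θ₁, rfl, h⟩ := hΘ.of_cons (by nofun)
    exact (ih (h.cons _)).map fun _ =>
      .exL hf hy (fun C hC => hΓ C (Multiset.mem_of_le h.le hC)) hΔ
  | exR hf _ ih => exact (ih hΘ).map fun _ => .exR hf
  | ref t _ ih => exact (ih (hΘ.cons _)).map fun _ => .ref t
  | repl hrepl _ ih => exact ih (hΘ.of_replFull hrepl)

def Anchored (K Γ : Multiset (Fm L)) : Prop :=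
  ∀ C ∈ K, C.freeVars ⊆ ⋃ D ∈ atomSet Γ, D.freeVars

namespace Anchored

variable {K Γ : Multiset (Fm L)}

theorem mono {Γ' : Multiset (Fm L)} (h : Anchored K Γ) (hΓ : atomSet Γ ⊆ atomSet Γ') :
    Anchored K Γ' :=
  fun C hC => (h C hC).trans (Set.biUnion_subset_biUnion_left hΓ)

theorem cons (Y : Fm L) (h : Anchored K Γ) : Anchored K (Y ::ₘ Γ) :=
  h.mono (atomSet_mono (Multiset.subset_cons _ _))

theorem of_cons {X : Fm L} (hX : ¬X.IsAtomic) (h : Anchored K (X ::ₘ Γ)) : Anchored K Γ :=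
  h.mono (atomSet_cons_of_not_isAtomic hX Γ).le

theorem notMem_freeVars {y : ℕ} (h : Anchored K Γ) (hΓ : ∀ C ∈ Γ, y ∉ C.freeVars) :
    ∀ C ∈ K + Γ, y ∉ C.freeVars := by
  intro C hC hy
  rcases Multiset.mem_add.1 hC with hC | hC
  · obtain ⟨D, hD, hyD⟩ := Set.mem_iUnion₂.1 (h C hC hy)
    exact hΓ D hD.1 hyD
  · exact hΓ C hC hy

end Anchored

theorem DerC.weaken {n : ℕ} {Γ Δ : Multiset (Fm L)} (D : DerC (ReplFull L) n Γ Δ)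
    {K : Multiset (Fm L)} (hK : Anchored K Γ) : DerC (ReplFull L) n (K + Γ) Δ := by
  induction D generalizing K with
  | ax hP => rw [Multiset.add_cons]; exact .ax hP
  | botL => rw [Multiset.add_cons]; exact .botL
  | andL _ ih =>
    rw [Multiset.add_cons]
    exact .andL
      (by simpa only [Multiset.add_cons] using ih (((hK.of_cons (by nofun)).cons _).cons _))
  | andR _ _ ih₁ ih₂ => exact .andR (ih₁ hK) (ih₂ hK)
  | orL _ _ ih₁ ih₂ =>
    rw [Multiset.add_cons]
    exact .orL (by simpa only [Multiset.add_cons] using ih₁ ((hK.of_cons (by nofun)).cons _))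
      (by simpa only [Multiset.add_cons] using ih₂ ((hK.of_cons (by nofun)).cons _))
  | orR _ ih => exact .orR (ih hK)
  | impL _ _ ih₁ ih₂ =>
    rw [Multiset.add_cons]
    exact .impL (ih₁ (hK.of_cons (by nofun)))
      (by simpa only [Multiset.add_cons] using ih₂ ((hK.of_cons (by nofun)).cons _))
  | impR _ ih => exact .impR (by simpa only [Multiset.add_cons] using ih (hK.cons _))
  | allL hf _ ih =>
    rw [Multiset.add_cons]
    exact .allL hf (by simpa only [Multiset.add_cons] using ih (hK.cons _))
  | allR hf hy hΓ hΔ _ ih => exact .allR hf hy (hK.notMem_freeVars hΓ) hΔ (ih hK)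
  | exL hf hy hΓ hΔ _ ih =>
    have hK' := hK.of_cons (by nofun)
    rw [Multiset.add_cons]
    exact .exL hf hy (hK'.notMem_freeVars hΓ) hΔ
      (by simpa only [Multiset.add_cons] using ih (hK'.cons _))
  | exR hf _ ih => exact .exR hf (ih hK)
  | ref t _ ih => exact .ref t (by simpa only [Multiset.add_cons] using ih (hK.cons _))
  | repl hrepl _ ih =>
    obtain ⟨s, r, v, Q, Γ, hQ, hs, hr, rfl, rfl⟩ := hrepl
    have hK' : Anchored K (Fm.equal s r ::ₘ Q.subst v s ::ₘ Q.subst v r ::ₘ Γ) :=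
      hK.mono (atomSet_mono fun _ h => by simp only [Multiset.mem_cons] at h ⊢; tauto)
    simp only [Multiset.add_cons] at ih ⊢
    exact .repl ⟨s, r, v, Q, K + Γ, hQ, hs, hr, rfl, rfl⟩ (ih hK')

theorem Der.replMinus_of_replFull {Γp Γc Δ : Multiset (Fm L)} (hrepl : ReplMinus L Γp Γc)
    (d : Der (ReplFull L) Γp Δ) : Der (ReplFull L) Γc Δ := by
  obtain ⟨s, r, v, Q, Γ, hQ, hs, hr, rfl, rfl⟩ := hrepl
  have hK : Anchored {Q.subst v s} (Fm.equal s r ::ₘ Q.subst v r ::ₘ Γ) := by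
    simp only [Anchored, Multiset.mem_singleton, forall_eq]
    refine (hQ.freeVars_subst_subset v s r).trans (Set.union_subset ?_ ?_) <;>
      refine Set.subset_biUnion_of_mem (u := Fm.freeVars) ⟨by simp, ?_⟩
    exacts [.equal _ _, hQ.subst _ _]
  refine d.map fun _ D => .repl ⟨s, r, v, Q, Γ, hQ, hs, hr, rfl, rfl⟩ ?_
  simpa only [Multiset.singleton_add, Multiset.cons_swap (Q.subst v s)] using D.weaken hK

/-- Equivalence of `G3c^=` and `G3c^=⁻`: a sequent `Γ ⇒ Δ` is derivable in `G3c^=`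
if and only if it is derivable in `G3c^=⁻`. -/
theorem G3cEq_equiv_G3cEqMinus (L : FirstOrder.Language.{u, v})
    (Γ Δ : Multiset (Fm L)) :
    (∃ n, DerC (ReplFull L) n Γ Δ) ↔ (∃ n, DerC (ReplMinus L) n Γ Δ) :=
  ⟨fun ⟨_, D⟩ => D.der_replMinus (.refl Γ),
    fun ⟨_, D⟩ => D.der_of_admissible Der.replMinus_of_replFull⟩
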